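/- Let P be a polynomial over K whose Newton polygon has an extremal point at abscissa d with left slope λ₀, normalized so NF(P)(d) = λ₀ d, and let φ(x) = NF(P)(x) for x ≤ d, φ(x) = λ₀ x for x > d. Let A be a polynomial of degree d with NF(A) = NF(P) restricted to [0,d]. Then for any polynomial Q: (a) b(Q mod A) ≥ b(Q) for b ∈ {b_φ, b₀, b₁}; and (b) b₀(Q div A) ≥ b_φ(Q), where b_φ(Q) = min_x (NF(Q)(x) − φ(x)), b₀(Q) = min_x (NF(Q)(x) − λ₀ x), b₁(Q) = min_x (NF(Q)(x) − λ₁ x), λ₁ being the right slope of NP(P) at d. -/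

import Mathlib

/-!
If `c < b_φ(Q)` then every coefficient satisfies `v(q_i) ≥ φ(i) + c`; conversely, such
coefficientwise bounds with `φ` linear (or equal to `NF(P)` on the support) give back
`NF(T)(x) ≥ φ(x) + c`, since `φ + c` is then a supremum of affine minorants of the points of `T`.
So it suffices that long division by `A` preserves the coefficient bounds. One division step
subtracts `(q_m / a_d) X^(m-d) A`; as `v(a_d) = λ₀ d` and `v(a_j) ≥ NF(P)(j)`, its coefficients obey
the same bound provided `ψ(j + k) + λ₀ d ≤ ψ(d + k) + NF(P)(j)` for `j ≤ d`. This holds for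
`ψ = φ` and for `ψ = λ x` with `λ ≥ λ₀`, because `NF(P)(x) ≥ λ₀ x` and `NF(P)` has slope at most
`λ₀` on `[0, d]`: both follow from convexity and the chord through `d - 1` and `d`.
-/

open Polynomial Set

noncomputable section

variable {K : Type*} [Field K]

/-- Map `WithTop ℤ` into `EReal`. -/
def toE : WithTop ℤ → EReal := WithTop.recTopCoe ⊤ (fun n => ((n : ℝ) : EReal))

/-- Newton function of a polynomial: the largest convex function lying below the
points `(i, val aᵢ)`, realized as the sup of affine minorants. -/
def NF (v : AddValuation K (WithTop ℤ)) (P : K[X]) (x : ℝ) : EReal :=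
  sSup {y : EReal | ∃ a b : ℝ,
    (∀ i : ℕ, i ≤ P.natDegree → ((a * (i : ℝ) + b : ℝ) : EReal) ≤ toE (v (P.coeff i))) ∧
    y = ((a * x + b : ℝ) : EReal)}

/-- The invariant `b_φ(Q) = min_{0 ≤ x ≤ deg Q} (NF(Q)(x) − φ(x))`. -/
def bE (v : AddValuation K (WithTop ℤ)) (φ : ℝ → EReal) (Q : K[X]) : EReal :=
  sInf {y : EReal | ∃ x : ℝ, 0 ≤ x ∧ x ≤ (Q.natDegree : ℝ) ∧ y = NF v Q x - φ x}

@[simp] lemma toE_top : toE ⊤ = ⊤ := rfl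

@[simp] lemma toE_coe (n : ℤ) : toE n = ((n : ℝ) : EReal) := rfl

lemma toE_ne_bot (t : WithTop ℤ) : toE t ≠ ⊥ := by
  cases t <;> simp

lemma toE_mono : Monotone toE := by
  intro s t h
  cases t with
  | top => exact le_top
  | coe n =>
    obtain ⟨m, rfl⟩ := WithTop.ne_top_iff_exists.1 (ne_top_of_le_ne_top WithTop.coe_ne_top h)
    simpa using WithTop.coe_le_coe.1 h

lemma toE_add (s t : WithTop ℤ) : toE (s + t) = toE s + toE t := by
  cases s with
  | top => simp [EReal.top_add_of_ne_bot (toE_ne_bot t)]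
  | coe m =>
    cases t with
    | top => simp
    | coe n => simp [← WithTop.coe_add, ← EReal.coe_add]

lemma EReal.add_coe_le_of_lt_sub {c : ℝ} {y z : EReal} (h : (c : EReal) < z - y) : y + c ≤ z := by
  induction y with
  | bot => simp
  | coe r =>
    rw [EReal.lt_sub_iff_add_lt (.inl (EReal.coe_ne_bot r)) (.inl (EReal.coe_ne_top r))] at h
    exact (add_comm (r : EReal) c ▸ h).le
  | top => simp [EReal.sub_top] at h

lemma EReal.le_sub_of_forall_coe_lt {B y z : EReal} (hbot : y ≠ ⊥) (htop : y = ⊤ → B = ⊥)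
    (h : ∀ c : ℝ, (c : EReal) < B → y + c ≤ z) : B ≤ z - y := by
  induction y with
  | bot => exact absurd rfl hbot
  | top => simp [htop rfl]
  | coe r =>
    refine EReal.ge_of_forall_gt_iff_ge.1 fun c hc => ?_
    rw [EReal.le_sub_iff_add_le (.inl (EReal.coe_ne_bot r)) (.inl (EReal.coe_ne_top r)), add_comm]
    exact h c hc

namespace Polynomial

lemma natDegree_mod_le_left (p q : K[X]) : (p % q).natDegree ≤ p.natDegree := by
  by_cases hq : q = 0
  · rw [hq, EuclideanDomain.mod_zero]
  rcases lt_or_ge p.degree q.degree with h | h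
  · rw [(mod_eq_self_iff hq).2 h]
  · exact (natDegree_le_natDegree (degree_mod_lt p hq).le).trans (natDegree_le_natDegree h)

lemma sub_mul_mod (p q r : K[X]) : (p - q * r) % q = p % q := by
  rw [sub_mod, EuclideanDomain.mod_eq_zero.2 (dvd_mul_right q r), sub_zero]

lemma sub_mul_div (p r : K[X]) {q : K[X]} (hq : q ≠ 0) : (p - q * r) / q = p / q - r := by
  refine mul_left_cancel₀ hq ?_
  have h₁ := EuclideanDomain.div_add_mod (p - q * r) q
  have h₂ := EuclideanDomain.div_add_mod p q
  rw [sub_mul_mod] at h₁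
  linear_combination h₁ - h₂

end Polynomial

variable (v : AddValuation K (WithTop ℤ))

lemma le_toE_val_add {a : EReal} {x y : K} (hx : a ≤ toE (v x)) (hy : a ≤ toE (v y)) :
    a ≤ toE (v (x + y)) :=
  calc a ≤ min (toE (v x)) (toE (v y)) := le_min hx hy
    _ = toE (min (v x) (v y)) := toE_mono.map_min.symm
    _ ≤ toE (v (x + y)) := toE_mono (v.map_add x y)

lemma le_toE_val_sub {a : EReal} {x y : K} (hx : a ≤ toE (v x)) (hy : a ≤ toE (v y)) :
    a ≤ toE (v (x - y)) := by
  simpa [sub_eq_add_neg] using le_toE_val_add v hx (by rwa [AddValuation.map_neg])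

lemma le_NF {Q : K[X]} {a b : ℝ}
    (h : ∀ i : ℕ, i ≤ Q.natDegree → ((a * i + b : ℝ) : EReal) ≤ toE (v (Q.coeff i))) (x : ℝ) :
    ((a * x + b : ℝ) : EReal) ≤ NF v Q x :=
  le_sSup ⟨a, b, h, rfl⟩

lemma NF_le_toE_coeff {Q : K[X]} {i : ℕ} (hi : i ≤ Q.natDegree) :
    NF v Q i ≤ toE (v (Q.coeff i)) :=
  sSup_le fun _ ⟨_, _, hab, hy⟩ => hy ▸ hab i hi

lemma exists_coe_le_toE_coeff (Q : K[X]) : ∃ m : ℝ, ∀ i, (m : EReal) ≤ toE (v (Q.coeff i)) := by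
  obtain ⟨m, hm⟩ := Finset.exists_le (α := ℝᵒᵈ)
    ((Finset.range (Q.natDegree + 1)).image fun i => (toE (v (Q.coeff i))).toReal)
  refine ⟨OrderDual.ofDual m, fun i => ?_⟩
  rcases le_or_gt i Q.natDegree with hi | hi
  · refine le_trans (EReal.coe_le_coe_iff.2 ?_) (EReal.coe_toReal_le (toE_ne_bot _))
    exact hm _ (Finset.mem_image_of_mem _ (Finset.mem_range.2 (Nat.lt_succ_of_le hi)))
  · simp [Polynomial.coeff_eq_zero_of_natDegree_lt hi]

lemma NF_ne_bot (Q : K[X]) (x : ℝ) : NF v Q x ≠ ⊥ := by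
  obtain ⟨m, hm⟩ := exists_coe_le_toE_coeff v Q
  have := le_NF v (a := 0) (b := m) (fun i _ => by simpa using hm i) x
  exact ne_bot_of_le_ne_bot (EReal.coe_ne_bot _) this

lemma NF_natDegree (Q : K[X]) : NF v Q Q.natDegree = toE (v Q.leadingCoeff) := by
  refine le_antisymm (NF_le_toE_coeff v le_rfl) (EReal.ge_of_forall_gt_iff_ge.1 fun c hc => ?_)
  obtain ⟨m, hm⟩ := exists_coe_le_toE_coeff v Q
  -- the line through `(deg Q, c)` with slope `max 0 (c - m)` is a minorant
  set a := max 0 (c - m)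
  have hmin : ∀ i : ℕ, i ≤ Q.natDegree →
      ((a * i + (c - a * Q.natDegree) : ℝ) : EReal) ≤ toE (v (Q.coeff i)) := by
    intro i hi
    rcases hi.lt_or_eq with hi | rfl
    · refine le_trans (EReal.coe_le_coe_iff.2 ?_) (hm i)
      have : (i : ℝ) + 1 ≤ Q.natDegree := by exact_mod_cast hi
      nlinarith [le_max_left 0 (c - m), le_max_right 0 (c - m)]
    · simpa using hc.le
  simpa using le_NF v hmin Q.natDegree

lemma NF_add_le_NF {P T : K[X]} {c : ℝ}
    (h : ∀ i : ℕ, i ≤ T.natDegree → NF v P i + c ≤ toE (v (T.coeff i))) (x : ℝ) :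
    NF v P x + c ≤ NF v T x := by
  rw [← EReal.le_sub_iff_add_le (.inl (EReal.coe_ne_bot c)) (.inl (EReal.coe_ne_top c))]
  refine sSup_le ?_
  rintro _ ⟨a, b, hab, rfl⟩
  rw [EReal.le_sub_iff_add_le (.inl (EReal.coe_ne_bot c)) (.inl (EReal.coe_ne_top c)),
    ← EReal.coe_add, add_assoc]
  refine le_NF v (fun i hi => ?_) x
  rw [← add_assoc, EReal.coe_add]
  exact (add_le_add (le_NF v hab i) le_rfl).trans (h i hi)

section Slopes

variable {P : K[X]} {a b : ℝ}

lemma affine_le_NF_of_le_of_lt {x x₀ x₁ : ℝ} (h₀ : ((a * x₀ + b : ℝ) : EReal) ≤ NF v P x₀)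
    (h₁ : NF v P x₁ ≤ ((a * x₁ + b : ℝ) : EReal)) (hx : x ≤ x₀) (h01 : x₀ < x₁) :
    ((a * x + b : ℝ) : EReal) ≤ NF v P x := by
  refine EReal.ge_of_forall_gt_iff_ge.1 fun z hz => ?_
  have hz : z < a * x + b := EReal.coe_lt_coe_iff.1 hz
  -- a minorant within `ε` of `a X + b` at `x₀` and below it at `x₁` has slope
  -- `< a + ε / (x₁ - x₀)`, and `ε` is chosen so that it then stays above `z` at `x`
  set ε := (a * x + b - z) * (x₁ - x₀) / (x₁ - x)
  have hε : ε * (x₁ - x) = (a * x + b - z) * (x₁ - x₀) := div_mul_cancel₀ _ (by linarith)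
  have hε0 : 0 < ε := div_pos (mul_pos (by linarith) (by linarith)) (by linarith)
  obtain ⟨_, ⟨s, t, hst, rfl⟩, hlt⟩ :=
    lt_sSup_iff.1 (lt_of_lt_of_le (EReal.coe_lt_coe_iff.2 (sub_lt_self _ hε0)) h₀)
  have hl₀ : a * x₀ + b - ε < s * x₀ + t := EReal.coe_lt_coe_iff.1 hlt
  have hl₁ : s * x₁ + t ≤ a * x₁ + b := EReal.coe_le_coe_iff.1 ((le_NF v hst x₁).trans h₁)
  have hs : (s - a) * (x₁ - x₀) < ε := by linarith
  have hsx : (s - a) * (x₁ - x₀) * (x₀ - x) ≤ ε * (x₀ - x) :=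
    mul_le_mul_of_nonneg_right hs.le (by linarith)
  have : z ≤ s * x + t := by nlinarith
  exact (EReal.coe_le_coe_iff.2 this).trans (le_NF v hst x)

lemma NF_le_add_of_le {x y x₁ : ℝ} (hx : ((a * x + b : ℝ) : EReal) ≤ NF v P x)
    (h₁ : NF v P x₁ ≤ ((a * x₁ + b : ℝ) : EReal)) (hxy : x ≤ y) (hy : y ≤ x₁) :
    NF v P y ≤ NF v P x + ((a * (y - x) : ℝ) : EReal) := by
  refine sSup_le ?_
  rintro _ ⟨s, t, hst, rfl⟩
  rcases le_total s a with hs | hs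
  · calc ((s * y + t : ℝ) : EReal) = ((s * x + t : ℝ) : EReal) + ((s * (y - x) : ℝ) : EReal) := by
          rw [← EReal.coe_add]; ring_nf
      _ ≤ NF v P x + ((a * (y - x) : ℝ) : EReal) :=
          add_le_add (le_NF v hst x)
            (EReal.coe_le_coe_iff.2 (mul_le_mul_of_nonneg_right hs (by linarith)))
  · have hl₁ : s * x₁ + t ≤ a * x₁ + b := EReal.coe_le_coe_iff.1 ((le_NF v hst x₁).trans h₁)
    calc ((s * y + t : ℝ) : EReal) ≤ ((a * x + b + a * (y - x) : ℝ) : EReal) :=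
          EReal.coe_le_coe_iff.2 (by nlinarith)
      _ ≤ NF v P x + ((a * (y - x) : ℝ) : EReal) := by
          rw [EReal.coe_add]; exact add_le_add hx le_rfl

end Slopes

def CoeffBound (ψ : ℕ → EReal) (Q : K[X]) : Prop :=
  ∀ i, ψ i ≤ toE (v (Q.coeff i))

namespace CoeffBound

variable {v} {ψ : ℕ → EReal} {Q T : K[X]}

lemma zero : CoeffBound v ψ 0 := fun i => by simp

lemma add (hQ : CoeffBound v ψ Q) (hT : CoeffBound v ψ T) : CoeffBound v ψ (Q + T) :=
  fun i => by simpa using le_toE_val_add v (hQ i) (hT i)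

lemma sub (hQ : CoeffBound v ψ Q) (hT : CoeffBound v ψ T) : CoeffBound v ψ (Q - T) :=
  fun i => by simpa using le_toE_val_sub v (hQ i) (hT i)

end CoeffBound

lemma coeffBound_C_mul_X_pow {ψ : ℕ → EReal} {c : K} {k : ℕ} (h : ψ k ≤ toE (v c)) :
    CoeffBound v ψ (C c * X ^ k) := fun i => by
  rw [coeff_C_mul_X_pow]
  split_ifs with hik
  · exact hik ▸ h
  · simp

lemma coeffBound_of_lt_bE {φ : ℝ → EReal} {Q : K[X]} {c : ℝ} (hc : (c : EReal) < bE v φ Q) :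
    CoeffBound v (fun i => φ i + c) Q := fun i => by
  rcases le_or_gt i Q.natDegree with hi | hi
  · refine EReal.add_coe_le_of_lt_sub (hc.trans_le ?_)
    calc bE v φ Q ≤ NF v Q i - φ i := sInf_le ⟨i, by positivity, by exact_mod_cast hi, rfl⟩
      _ ≤ toE (v (Q.coeff i)) - φ i := EReal.sub_le_sub (NF_le_toE_coeff v hi) le_rfl
  · simp [Polynomial.coeff_eq_zero_of_natDegree_lt hi]

lemma bE_le_bE {φ ψ : ℝ → EReal} {Q T : K[X]}
    (hψ : ∀ x : ℝ, 0 ≤ x → x ≤ T.natDegree → ψ x ≠ ⊥ ∧ (ψ x = ⊤ → bE v φ Q = ⊥))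
    (h : ∀ c : ℝ, (c : EReal) < bE v φ Q →
      ∀ x : ℝ, 0 ≤ x → x ≤ T.natDegree → ψ x + c ≤ NF v T x) :
    bE v φ Q ≤ bE v ψ T := by
  refine le_sInf ?_
  rintro _ ⟨x, hx0, hxT, rfl⟩
  exact EReal.le_sub_of_forall_coe_lt (hψ x hx0 hxT).1 (hψ x hx0 hxT).2
    fun c hc => h c hc x hx0 hxT

lemma bE_le_bE_linear {φ : ℝ → EReal} {lam : ℝ} {Q T : K[X]}
    (h : ∀ c : ℝ, CoeffBound v (fun i => φ i + c) Q →
      CoeffBound v (fun i => ((lam * i : ℝ) : EReal) + c) T) :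
    bE v φ Q ≤ bE v (fun x => ((lam * x : ℝ) : EReal)) T := by
  refine bE_le_bE v (fun _ _ _ => ⟨EReal.coe_ne_bot _, fun h => absurd h (EReal.coe_ne_top _)⟩)
    fun c hc x _ _ => ?_
  have hT := h c (coeffBound_of_lt_bE v hc)
  rw [← EReal.coe_add]
  exact le_NF v (fun i _ => by rw [EReal.coe_add]; exact hT i) x

lemma bE_le_bE_of_eq_NF {φ : ℝ → EReal} {P Q T : K[X]} (hdeg : T.natDegree ≤ Q.natDegree)
    (hφ : ∀ x ≤ (T.natDegree : ℝ), φ x = NF v P x)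
    (h : ∀ c : ℝ, CoeffBound v (fun i => φ i + c) Q → CoeffBound v (fun i => φ i + c) T) :
    bE v φ Q ≤ bE v φ T := by
  refine bE_le_bE v (fun x hx0 hxT => ⟨hφ x hxT ▸ NF_ne_bot v P x, fun htop => ?_⟩)
    fun c hc x _ hxT => hφ x hxT ▸ NF_add_le_NF v (fun i hi => ?_) x
  · have hxQ : x ≤ Q.natDegree := hxT.trans (by exact_mod_cast hdeg)
    refine le_bot_iff.1 ((sInf_le ⟨x, hx0, hxQ, rfl⟩ : bE v φ Q ≤ NF v Q x - φ x).trans ?_)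
    rw [htop, EReal.sub_top]
  · have hi' : (i : ℝ) ≤ T.natDegree := by exact_mod_cast hi
    exact hφ i hi' ▸ h c (coeffBound_of_lt_bE v hc) i

section Division

variable {A : K[X]} {d : ℕ} (hAd : A.natDegree = d) {a : ℝ} {ψ : ℕ → EReal}
  (hψ : ∀ j k, j ≤ d → ψ (j + k) + a ≤ ψ (d + k) + toE (v (A.coeff j)))
include hAd hψ

lemma coeffBound_mul_C_mul_X_pow {c : K} {k : ℕ} (hc : ψ (d + k) ≤ toE (v c) + a) :
    CoeffBound v ψ (A * (C c * X ^ k)) := fun i => by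
  rw [← mul_assoc, coeff_mul_X_pow', coeff_mul_C]
  split_ifs with hki
  swap
  · simp
  obtain ⟨j, rfl⟩ : ∃ j, i = j + k := ⟨i - k, by omega⟩
  rw [Nat.add_sub_cancel]
  rcases le_or_gt j d with hj | hj
  · refine (EReal.addLECancellable_coe a).add_le_add_iff_right.1 ?_
    calc ψ (j + k) + a ≤ ψ (d + k) + toE (v (A.coeff j)) := hψ j k hj
      _ ≤ toE (v c) + a + toE (v (A.coeff j)) := add_le_add hc le_rfl
      _ = toE (v (A.coeff j * c)) + a := by
          rw [v.map_mul, toE_add, add_comm (toE (v (A.coeff j))), add_right_comm]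
  · simp [coeff_eq_zero_of_natDegree_lt (hAd ▸ hj)]

theorem coeffBound_mod_div (ha : toE (v (A.coeff d)) = a) {χ : ℕ → EReal}
    (hχ : ∀ k, χ k + a ≤ ψ (d + k)) (Q : K[X]) (hQ : CoeffBound v ψ Q) :
    CoeffBound v ψ (Q % A) ∧ CoeffBound v χ (Q / A) := by
  have hAd0 : A.coeff d ≠ 0 := fun h => EReal.coe_ne_top a (by simp [← ha, h])
  have hA0 : A ≠ 0 := fun h => hAd0 (by simp [h])
  induction hQd : Q.degree using WellFoundedLT.induction generalizing Q with | ind n IH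
  subst hQd
  rcases lt_or_ge Q.degree A.degree with hlt | hge
  · rw [(mod_eq_self_iff hA0).2 hlt, (Polynomial.div_eq_zero_iff hA0).2 hlt]
    exact ⟨hQ, CoeffBound.zero⟩
  have hQ0 : Q ≠ 0 := fun h => by simp [h, degree_eq_natDegree hA0] at hge
  obtain ⟨k, hk⟩ : ∃ k, Q.natDegree = d + k :=
    ⟨Q.natDegree - d, by have := natDegree_le_natDegree hge; omega⟩
  -- one step of long division: subtract `c X^k A`, which kills the leading term of `Q`
  set c := Q.leadingCoeff / A.coeff d
  have hc : toE (v c) + a = toE (v (Q.coeff (d + k))) := by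
    rw [← ha, ← toE_add, ← v.map_mul, div_mul_cancel₀ _ hAd0, leadingCoeff, hk]
  have hM : CoeffBound v χ (C c * X ^ k) := coeffBound_C_mul_X_pow v <|
    (EReal.addLECancellable_coe a).add_le_add_iff_right.1 ((hχ k).trans (hc ▸ hQ _))
  have hAM : CoeffBound v ψ (A * (C c * X ^ k)) :=
    coeffBound_mul_C_mul_X_pow v hAd hψ (hc ▸ hQ _)
  have hlower : (Q - A * (C c * X ^ k)).degree < Q.degree := by
    have hc0 : c ≠ 0 := div_ne_zero (leadingCoeff_ne_zero.2 hQ0) hAd0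
    refine degree_sub_lt_left ?_ hQ0 ?_
    · rw [degree_mul, degree_C_mul_X_pow k hc0, degree_eq_natDegree hA0,
        degree_eq_natDegree hQ0, hAd, hk]
      norm_cast
    · have hlA : A.leadingCoeff = A.coeff d := by rw [leadingCoeff, hAd]
      rw [leadingCoeff_mul, leadingCoeff_C_mul_X_pow, hlA, mul_div_cancel₀ _ hAd0]
  obtain ⟨hmod, hdiv⟩ := IH _ hlower _ (hQ.sub hAM) rfl
  rw [sub_mul_mod] at hmod
  rw [sub_mul_div _ _ hA0] at hdiv
  exact ⟨hmod, by simpa using hdiv.add hM⟩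

end Division

-- `φ` of the statement: `NF(P)` up to `d`, continued by the line of slope `λ₀`
def truncNF (P : K[X]) (d : ℕ) (lam0 : ℝ) (x : ℝ) : EReal :=
  if x ≤ d then NF v P x else ((lam0 * x : ℝ) : EReal)

section Vertex

variable {v} {P : K[X]} {d : ℕ} {lam0 : ℝ}
  (hnorm : NF v P (d : ℝ) = ((lam0 * d : ℝ) : EReal))
  (hleft : NF v P ((d : ℝ) - 1) = ((lam0 * ((d : ℝ) - 1) : ℝ) : EReal))
include hnorm

lemma truncNF_natCast_add (k : ℕ) :
    truncNF v P d lam0 ((d + k : ℕ) : ℝ) = ((lam0 * (d + k : ℕ) : ℝ) : EReal) := by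
  rcases k.eq_zero_or_pos with rfl | hk
  · simpa [truncNF] using hnorm
  · rw [truncNF, if_neg (by push_cast; exact not_le.2 (by simp [hk]))]

include hleft

lemma linear_le_NF {j : ℕ} (hj : j ≤ d) : ((lam0 * j : ℝ) : EReal) ≤ NF v P j := by
  rcases hj.lt_or_eq with hj | rfl
  · have hj' : (j : ℝ) ≤ d - 1 := by
      have : (j : ℝ) + 1 ≤ d := by exact_mod_cast hj
      linarith
    simpa only [add_zero] using affine_le_NF_of_le_of_lt v (b := 0)
      (by rw [add_zero]; exact hleft.ge) (by rw [add_zero]; exact hnorm.le) hj' (by linarith)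
  · exact hnorm.ge

lemma NF_natCast_add_le {j k : ℕ} (hjk : j + k ≤ d) :
    NF v P ((j + k : ℕ) : ℝ) ≤ NF v P j + ((lam0 * k : ℝ) : EReal) := by
  have hd : ((j + k : ℕ) : ℝ) ≤ d := by exact_mod_cast hjk
  have h := NF_le_add_of_le v (x := j) (b := 0)
    (by rw [add_zero]; exact linear_le_NF hnorm hleft (by omega : j ≤ d))
    (by rw [add_zero]; exact hnorm.le) (by push_cast; linarith) hd
  convert h using 3
  push_cast; ring

lemma truncNF_slope {j : ℕ} (k : ℕ) (hj : j ≤ d) :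
    truncNF v P d lam0 ((j + k : ℕ) : ℝ) + ((lam0 * d : ℝ) : EReal) ≤
      truncNF v P d lam0 ((d + k : ℕ) : ℝ) + NF v P j := by
  rw [truncNF_natCast_add hnorm]
  by_cases hjk : j + k ≤ d
  · rw [truncNF, if_pos (by exact_mod_cast hjk)]
    calc NF v P ((j + k : ℕ) : ℝ) + ((lam0 * d : ℝ) : EReal)
        ≤ NF v P j + ((lam0 * k : ℝ) : EReal) + ((lam0 * d : ℝ) : EReal) :=
          add_le_add (NF_natCast_add_le hnorm hleft hjk) le_rfl
      _ = ((lam0 * (d + k : ℕ) : ℝ) : EReal) + NF v P j := by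
          rw [add_assoc, ← EReal.coe_add, add_comm]; congr 2; push_cast; ring
  · rw [truncNF, if_neg (by exact_mod_cast hjk)]
    calc ((lam0 * (j + k : ℕ) : ℝ) : EReal) + ((lam0 * d : ℝ) : EReal)
        = ((lam0 * (d + k : ℕ) : ℝ) : EReal) + ((lam0 * j : ℝ) : EReal) := by
          rw [← EReal.coe_add, ← EReal.coe_add]; congr 1; push_cast; ring
      _ ≤ _ := add_le_add le_rfl (linear_le_NF hnorm hleft hj)

lemma linear_slope {lam : ℝ} (hlam : lam0 ≤ lam) {j : ℕ} (k : ℕ) (hj : j ≤ d) :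
    ((lam * (j + k : ℕ) : ℝ) : EReal) + ((lam0 * d : ℝ) : EReal) ≤
      ((lam * (d + k : ℕ) : ℝ) : EReal) + NF v P j := by
  have hjd : (j : ℝ) ≤ d := by exact_mod_cast hj
  calc ((lam * (j + k : ℕ) : ℝ) : EReal) + ((lam0 * d : ℝ) : EReal)
      ≤ ((lam * (d + k : ℕ) : ℝ) : EReal) + ((lam0 * j : ℝ) : EReal) := by
        rw [← EReal.coe_add, ← EReal.coe_add, EReal.coe_le_coe_iff]; push_cast; nlinarith
    _ ≤ _ := add_le_add le_rfl (linear_le_NF hnorm hleft hj)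

omit hleft in
lemma truncNF_quotient_slope (k : ℕ) :
    ((lam0 * k : ℝ) : EReal) + ((lam0 * d : ℝ) : EReal) ≤ truncNF v P d lam0 ((d + k : ℕ) : ℝ) := by
  rw [truncNF_natCast_add hnorm, ← EReal.coe_add]
  exact EReal.coe_le_coe_iff.2 (by push_cast; linarith)

variable {A : K[X]} (hAd : A.natDegree = d)
  (hlead : toE (v (A.coeff d)) = ((lam0 * d : ℝ) : EReal))
  (hAP : ∀ j : ℕ, j ≤ d → NF v P j ≤ toE (v (A.coeff j)))
include hAd hlead hAP

omit hnorm hleft in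
lemma coeffBound_mod_div_of_slope {ψ χ : ℕ → EReal}
    (hψ : ∀ j k, j ≤ d → ψ (j + k) + ((lam0 * d : ℝ) : EReal) ≤ ψ (d + k) + NF v P j)
    (hχ : ∀ k, χ k + ((lam0 * d : ℝ) : EReal) ≤ ψ (d + k)) (c : ℝ) {Q : K[X]}
    (hQ : CoeffBound v (fun i => ψ i + c) Q) :
    CoeffBound v (fun i => ψ i + c) (Q % A) ∧ CoeffBound v (fun i => χ i + c) (Q / A) := by
  refine coeffBound_mod_div v hAd (fun j k hj => ?_) hlead (fun k => ?_) Q hQ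
  · rw [add_right_comm]
    calc ψ (j + k) + ((lam0 * d : ℝ) : EReal) + c ≤ ψ (d + k) + NF v P j + c :=
          add_le_add (hψ j k hj) le_rfl
      _ ≤ ψ (d + k) + c + toE (v (A.coeff j)) := by
          rw [add_right_comm]; exact add_le_add le_rfl (hAP j hj)
  · rw [add_right_comm]; exact add_le_add (hχ k) le_rfl

theorem bE_truncNF_le_mod (Q : K[X]) :
    bE v (truncNF v P d lam0) Q ≤ bE v (truncNF v P d lam0) (Q % A) := by
  have hA0 : A ≠ 0 := by
    rintro rfl
    rw [coeff_zero, v.map_zero, toE_top] at hlead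
    exact EReal.coe_ne_top _ hlead.symm
  have hdeg : (Q % A).natDegree ≤ d := hAd ▸ natDegree_le_natDegree (degree_mod_lt Q hA0).le
  refine bE_le_bE_of_eq_NF v (natDegree_mod_le_left Q A)
    (fun x hx => if_pos (hx.trans (by exact_mod_cast hdeg))) fun c hQ => ?_
  exact (coeffBound_mod_div_of_slope hAd hlead hAP (χ := fun _ => ⊥)
    (fun _ k hj => truncNF_slope hnorm hleft k hj) (fun _ => by simp) c hQ).1

theorem bE_linear_le_mod {lam : ℝ} (hlam : lam0 ≤ lam) (Q : K[X]) :
    bE v (fun x => ((lam * x : ℝ) : EReal)) Q ≤ bE v (fun x => ((lam * x : ℝ) : EReal)) (Q % A) :=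
  bE_le_bE_linear v fun c hQ => (coeffBound_mod_div_of_slope hAd hlead hAP
    (χ := fun _ => ⊥) (fun _ k hj => linear_slope hnorm hleft hlam k hj) (fun _ => by simp)
    c hQ).1

theorem bE_truncNF_le_div (Q : K[X]) :
    bE v (truncNF v P d lam0) Q ≤ bE v (fun x => ((lam0 * x : ℝ) : EReal)) (Q / A) :=
  bE_le_bE_linear v fun c hQ => (coeffBound_mod_div_of_slope hAd hlead hAP
    (fun _ k hj => truncNF_slope hnorm hleft k hj) (truncNF_quotient_slope hnorm) c hQ).2

end Vertex

theorem stmt7_general (v : AddValuation K (WithTop ℤ)) (P : K[X]) (d : ℕ)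
    (lam0 lam1 : ℝ) (hlt : lam0 < lam1)
    (hnorm : NF v P (d : ℝ) = ((lam0 * d : ℝ) : EReal))
    (hleft : NF v P ((d : ℝ) - 1) = ((lam0 * ((d : ℝ) - 1) : ℝ) : EReal))
    (A : K[X]) (hAd : A.natDegree = d)
    (hNFA : ∀ x ∈ Set.Icc (0 : ℝ) (d : ℝ), NF v A x = NF v P x)
    (Q : K[X]) :
    (bE v (fun x => if x ≤ (d : ℝ) then NF v P x else ((lam0 * x : ℝ) : EReal)) Q
      ≤ bE v (fun x => if x ≤ (d : ℝ) then NF v P x else ((lam0 * x : ℝ) : EReal)) (Q % A)) ∧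
    (bE v (fun x => ((lam0 * x : ℝ) : EReal)) Q
      ≤ bE v (fun x => ((lam0 * x : ℝ) : EReal)) (Q % A)) ∧
    (bE v (fun x => ((lam1 * x : ℝ) : EReal)) Q
      ≤ bE v (fun x => ((lam1 * x : ℝ) : EReal)) (Q % A)) ∧
    (bE v (fun x => if x ≤ (d : ℝ) then NF v P x else ((lam0 * x : ℝ) : EReal)) Q
      ≤ bE v (fun x => ((lam0 * x : ℝ) : EReal)) (Q / A)) := by
  have hAP : ∀ j : ℕ, j ≤ d → NF v P j ≤ toE (v (A.coeff j)) := fun j hj => by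
    rw [← hNFA j ⟨by positivity, by exact_mod_cast hj⟩]
    exact NF_le_toE_coeff v (hAd ▸ hj)
  have hlead : toE (v (A.coeff d)) = ((lam0 * d : ℝ) : EReal) := by
    rw [← hnorm, ← hNFA d ⟨by positivity, le_rfl⟩, ← hAd, NF_natDegree]
    rfl
  exact ⟨bE_truncNF_le_mod hnorm hleft hAd hlead hAP Q,
    bE_linear_le_mod hnorm hleft hAd hlead hAP le_rfl Q,
    bE_linear_le_mod hnorm hleft hAd hlead hAP hlt.le Q,
    bE_truncNF_le_div hnorm hleft hAd hlead hAP Q⟩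

/-- for `A` of degree `d` with `NF(A) = NF(P)|[0,d]`:
(a) `b(Q mod A) ≥ b(Q)` for `b ∈ {b_φ, b₀, b₁}`; (b) `b₀(Q div A) ≥ b_φ(Q)`. -/
theorem stmt7 (v : AddValuation K (WithTop ℤ)) (P : K[X]) (hP : P ≠ 0)
    (d : ℕ) (hdn : d ≤ P.natDegree)
    (lam0 lam1 : ℝ) (hlt : lam0 < lam1)
    (hnorm : NF v P (d : ℝ) = ((lam0 * d : ℝ) : EReal))
    (hleft : NF v P ((d : ℝ) - 1) = ((lam0 * ((d : ℝ) - 1) : ℝ) : EReal))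
    (hright : NF v P ((d : ℝ) + 1) = ((lam0 * d + lam1 : ℝ) : EReal))
    (A : K[X]) (hAd : A.natDegree = d)
    (hNFA : ∀ x ∈ Set.Icc (0 : ℝ) (d : ℝ), NF v A x = NF v P x)
    (Q : K[X]) :
    (bE v (fun x => if x ≤ (d : ℝ) then NF v P x else ((lam0 * x : ℝ) : EReal)) Q
      ≤ bE v (fun x => if x ≤ (d : ℝ) then NF v P x else ((lam0 * x : ℝ) : EReal)) (Q % A)) ∧
    (bE v (fun x => ((lam0 * x : ℝ) : EReal)) Q
      ≤ bE v (fun x => ((lam0 * x : ℝ) : EReal)) (Q % A)) ∧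
    (bE v (fun x => ((lam1 * x : ℝ) : EReal)) Q
      ≤ bE v (fun x => ((lam1 * x : ℝ) : EReal)) (Q % A)) ∧
    (bE v (fun x => if x ≤ (d : ℝ) then NF v P x else ((lam0 * x : ℝ) : EReal)) Q
      ≤ bE v (fun x => ((lam0 * x : ℝ) : EReal)) (Q / A)) :=
  stmt7_general v P d lam0 lam1 hlt hnorm hleft A hAd hNFA Q
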